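/- Let Γ be a metric graph assembled from a finite edge set E with positive integer length function l, and consider the DP-system on Γ with a single initial vertex v_0. Then for every edge e ∈ E there exists T ≥ 0 such that for all t ≥ T, the number N_e(t) of dynamic points on e at time t equals the number of equivalence classes of the relation ≈ on W(v_0, e). -/
import Mathlib


/-!
Common framework: metric multigraphs assembled from an edge set `E`
(`ends : E → Sym2 V` with distinct endpoints), walks, dynamic-point
systems, stabilization times, and structural graph notions.
-/

/-- Walks in a multigraph on vertices `V` with edge set `E` and endpoint map `ends`:
an alternating sequence of vertices and edges. -/
inductive MGWalk {E V : Type} (ends : E → Sym2 V) : V → V → Type where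
  | nil (a : V) : MGWalk ends a a
  | cons {a b c : V} (e : E) (h : ends e = s(a, b)) (tail : MGWalk ends b c) :
      MGWalk ends a c

namespace MGWalk

variable {E V : Type} {ends : E → Sym2 V}

/-- Length of a walk with respect to an edge-length function. -/
def length (l : E → ℝ) : ∀ {a b : V}, MGWalk ends a b → ℝ
  | _, _, nil _ => 0
  | _, _, cons e _ tail => l e + tail.length l

/-- The list of edge entries of a walk. -/
def edges : ∀ {a b : V}, MGWalk ends a b → List E
  | _, _, nil _ => []
  | _, _, cons e _ tail => e :: tail.edges

end MGWalk

/-- A DP-system on a metric graph assembled from `E`: the vertex set is finite,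
no edge is a loop, the multigraph is connected, and the set of initial vertices
is nonempty. -/
def IsDPSystem {E V : Type} (ends : E → Sym2 V) (S : Set V) : Prop :=
  Finite V ∧ (∀ e, ¬ (ends e).IsDiag) ∧ (∀ a b : V, Nonempty (MGWalk ends a b)) ∧
    S.Nonempty

/-- A dynamic point is present at time `t` at distance `s` from endpoint `x` of
edge `e` (on the arc leaving `x`) iff some walk from an initial vertex to `x`
has length `t - s`. -/
def IsPoint {E V : Type} (ends : E → Sym2 V) (l : E → ℝ) (S : Set V)
    (t : ℝ) (e : E) (x : V) (s : ℝ) : Prop :=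
  x ∈ ends e ∧ 0 ≤ s ∧ s < l e ∧
    ∃ v₀ ∈ S, ∃ w : MGWalk ends v₀ x, w.length l = t - s

/-- Number of dynamic points on edge `e` at time `t`. -/
noncomputable def NptsEdge {E V : Type} (ends : E → Sym2 V) (l : E → ℝ)
    (S : Set V) (e : E) (t : ℝ) : ℕ :=
  Set.ncard {p : V × ℝ | IsPoint ends l S t e p.1 p.2}

/-- Total number of dynamic points at time `t`. -/
noncomputable def Npts {E V : Type} (ends : E → Sym2 V) (l : E → ℝ)
    (S : Set V) (t : ℝ) : ℕ :=
  Set.ncard {p : E × V × ℝ | IsPoint ends l S t p.1 p.2.1 p.2.2}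

/-- `T` is a stabilization bound: `T ≥ 0` and the total number of points is
constant from `T` on. -/
def IsStabBound {E V : Type} (ends : E → Sym2 V) (l : E → ℝ) (S : Set V)
    (T : ℝ) : Prop :=
  0 ≤ T ∧ ∀ t ≥ T, Npts ends l S t = Npts ends l S T

/-- The stabilization time: the least stabilization bound. -/
noncomputable def stabTime {E V : Type} (ends : E → Sym2 V) (l : E → ℝ)
    (S : Set V) : ℝ :=
  sInf {T : ℝ | IsStabBound ends l S T}

/-- `T` is a stabilization bound for edge `e`. -/
def IsEdgeStabBound {E V : Type} (ends : E → Sym2 V) (l : E → ℝ) (S : Set V)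
    (e : E) (T : ℝ) : Prop :=
  0 ≤ T ∧ ∀ t ≥ T, NptsEdge ends l S e t = NptsEdge ends l S e T

/-- The stabilization time of edge `e`. -/
noncomputable def edgeStabTime {E V : Type} (ends : E → Sym2 V) (l : E → ℝ)
    (S : Set V) (e : E) : ℝ :=
  sInf {T : ℝ | IsEdgeStabBound ends l S e T}

/-- Membership in `LSTDP(E)` (given the underlying system is a DP-system):
its stabilization time is maximal among all DP-systems assembled from `E`. -/
def IsMaxStab {E : Type} (l : E → ℝ) {V : Type} (ends : E → Sym2 V)
    (S : Set V) : Prop :=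
  ∀ (V' : Type) (ends' : E → Sym2 V') (S' : Set V'),
    IsDPSystem ends' S' → stabTime ends' l S' ≤ stabTime ends l S

/-- Degree of vertex `x` in the subgraph with edge set `C`. -/
noncomputable def edgeDegree {E V : Type} (ends : E → Sym2 V) (C : Set E)
    (x : V) : ℕ :=
  Set.ncard {e ∈ C | x ∈ ends e}

/-- Degree of vertex `x` in the whole graph. -/
noncomputable def degree {E V : Type} (ends : E → Sym2 V) (x : V) : ℕ :=
  Set.ncard {e : E | x ∈ ends e}

/-- `x` is a vertex of the subgraph with edge set `C`. -/
def OnEdgeSet {E V : Type} (ends : E → Sym2 V) (C : Set E) (x : V) : Prop :=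
  ∃ e ∈ C, x ∈ ends e

/-- The subgraph with edge set `C` is connected. -/
def EdgeSetConn {E V : Type} (ends : E → Sym2 V) (C : Set E) : Prop :=
  ∀ a b : V, OnEdgeSet ends C a → OnEdgeSet ends C b →
    ∃ w : MGWalk ends a b, ∀ e ∈ w.edges, e ∈ C

/-- `C` is the edge set of a cycle: nonempty, connected, and every vertex of its
support has degree exactly two in it. -/
def IsCycleSet {E V : Type} (ends : E → Sym2 V) (C : Set E) : Prop :=
  C.Nonempty ∧ EdgeSetConn ends C ∧
    ∀ x : V, OnEdgeSet ends C x → edgeDegree ends C x = 2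

/-- A bead graph: no vertex lies on two distinct cycles. -/
def IsBead {E V : Type} (ends : E → Sym2 V) : Prop :=
  ∀ C₁ C₂ : Set E, IsCycleSet ends C₁ → IsCycleSet ends C₂ → C₁ ≠ C₂ →
    ∀ x : V, ¬ (OnEdgeSet ends C₁ x ∧ OnEdgeSet ends C₂ x)

/-- The graph has no cycles. -/
def IsAcyclicG {E V : Type} (ends : E → Sym2 V) : Prop :=
  ∀ C : Set E, ¬ IsCycleSet ends C

/-- `H` is the edge set of a path subgraph: nonempty, connected, acyclic, and
all degrees within `H` are at most two. -/
def IsPathSet {E V : Type} (ends : E → Sym2 V) (H : Set E) : Prop :=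
  H.Nonempty ∧ EdgeSetConn ends H ∧ (∀ C ⊆ H, ¬ IsCycleSet ends C) ∧
    ∀ x : V, edgeDegree ends H x ≤ 2

/-- `x` is a terminal vertex of the path subgraph `H`. -/
def IsHandleTerminal {E V : Type} (ends : E → Sym2 V) (H : Set E) (x : V) : Prop :=
  edgeDegree ends H x = 1

/-- The type `W(v, e)` of walks from `v` to an endpoint of edge `e`. -/
def WalkTo {E V : Type} (ends : E → Sym2 V) (v : V) (e : E) : Type :=
  { p : Σ x : V, MGWalk ends v x // p.1 ∈ ends e }

/-- The relation `≈` on `W(v, e)`: walks with the same final endpoint are related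
iff their lengths are congruent modulo `2·l(e)`; walks with different final
endpoints are related iff the difference of their lengths is congruent to
`l(e)` modulo `2·l(e)`. -/
def wapprox {E V : Type} (ends : E → Sym2 V) (l : E → ℝ) (v : V) (e : E)
    (w₁ w₂ : WalkTo ends v e) : Prop :=
  (w₁.1.1 = w₂.1.1 ∧
    ∃ k : ℤ, w₁.1.2.length l - w₂.1.2.length l = k * (2 * l e)) ∨
  (w₁.1.1 ≠ w₂.1.1 ∧
    ∃ k : ℤ, w₁.1.2.length l - w₂.1.2.length l - l e = k * (2 * l e))

-- ====== auxiliary material ======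

namespace MGWalk
variable {E V : Type} {ends : E → Sym2 V}

def natLength (l : E → ℕ) : ∀ {a b : V}, MGWalk ends a b → ℕ
  | _, _, nil _ => 0
  | _, _, cons e _ tail => l e + tail.natLength l

lemma length_natCast (l : E → ℕ) {a b : V} (w : MGWalk ends a b) :
    w.length (fun e => (l e : ℝ)) = (w.natLength l : ℝ) := by
  induction w with
  | nil a => simp [length, natLength]
  | cons e h tail ih => simp [length, natLength, ih]

def append : ∀ {a b c : V}, MGWalk ends a b → MGWalk ends b c → MGWalk ends a c
  | _, _, _, nil _, w => w
  | _, _, _, cons e h tail, w => cons e h (tail.append w)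

lemma natLength_append (l : E → ℕ) : ∀ {a b c : V} (w₁ : MGWalk ends a b)
    (w₂ : MGWalk ends b c), (w₁.append w₂).natLength l = w₁.natLength l + w₂.natLength l := by
  intro a b c w₁ w₂
  induction w₁ with
  | nil a => simp [append, natLength]
  | cons e h tail ih => simp [append, natLength, ih]; omega

end MGWalk

def NSet {E V : Type} (ends : E → Sym2 V) (l : E → ℕ) (v₀ x : V) : Set ℕ :=
  {n | ∃ w : MGWalk ends v₀ x, w.natLength l = n}

lemma NSet.cross {E V : Type} {ends : E → Sym2 V} {l : E → ℕ} {v₀ a b : V} {f : E}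
    (h : ends f = s(a, b)) {n : ℕ} (hn : n ∈ NSet ends l v₀ a) :
    n + l f ∈ NSet ends l v₀ b := by
  obtain ⟨w, hw⟩ := hn
  exact ⟨w.append (MGWalk.cons f h (MGWalk.nil b)),
    by simp [MGWalk.natLength_append, MGWalk.natLength, hw]⟩

lemma NSet.add_two {E V : Type} {ends : E → Sym2 V} {l : E → ℕ} {v₀ x : V} {f : E}
    (hx : x ∈ ends f) {n : ℕ} (hn : n ∈ NSet ends l v₀ x) :
    n + 2 * l f ∈ NSet ends l v₀ x := by
  have h1 : ends f = s(x, Sym2.Mem.other hx) := (Sym2.other_spec hx).symm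
  have h2 : ends f = s(Sym2.Mem.other hx, x) := h1.trans Sym2.eq_swap
  have h3 := NSet.cross h2 (NSet.cross h1 hn)
  have heq : n + l f + l f = n + 2 * l f := by omega
  rwa [heq] at h3

lemma NSet.add_mul {E V : Type} {ends : E → Sym2 V} {l : E → ℕ} {v₀ x : V} {f : E}
    (hx : x ∈ ends f) {n : ℕ} (hn : n ∈ NSet ends l v₀ x) (k : ℕ) :
    n + 2 * l f * k ∈ NSet ends l v₀ x := by
  induction k with
  | zero => simpa using hn
  | succ k ih =>
      have h3 := NSet.add_two hx ih
      have heq : n + 2 * l f * k + 2 * l f = n + 2 * l f * (k + 1) := by ring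
      rwa [heq] at h3

lemma NSet.eventual {E V : Type} (ends : E → Sym2 V) (l : E → ℕ) (v₀ x : V)
    (f : E) (hx : x ∈ ends f) (hf : 0 < l f) :
    ∃ M : ℕ, ∀ n ≥ M, (n ∈ NSet ends l v₀ x ↔
      ∃ m ∈ NSet ends l v₀ x, (m : ZMod (2 * l f)) = (n : ZMod (2 * l f))) := by
  classical
  haveI : NeZero (2 * l f) := ⟨by omega⟩
  set D := 2 * l f with hD
  set N := NSet ends l v₀ x with hN
  let g : ZMod D → ℕ := fun r => if h : ∃ m ∈ N, (m : ZMod D) = r then h.choose else 0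
  refine ⟨Finset.univ.sup g, fun n hn => ⟨fun h => ⟨n, h, rfl⟩, ?_⟩⟩
  rintro ⟨m, hm, hmr⟩
  have hex : ∃ m' ∈ N, (m' : ZMod D) = ((n : ZMod D)) := ⟨m, hm, hmr⟩
  have hgmem : g (n : ZMod D) ∈ N ∧ ((g (n : ZMod D) : ℕ) : ZMod D) = (n : ZMod D) := by
    simp only [g, dif_pos hex]
    exact ⟨hex.choose_spec.1, hex.choose_spec.2⟩
  set m' := g (n : ZMod D) with hm'
  have hle : m' ≤ n := le_trans (Finset.le_sup (f := g) (Finset.mem_univ ((n : ZMod D)))) hn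
  have hmod : m' ≡ n [MOD D] := (ZMod.natCast_eq_natCast_iff _ _ _).mp hgmem.2
  have hdvd : D ∣ n - m' := (Nat.modEq_iff_dvd' hle).mp hmod
  obtain ⟨k, hk⟩ := hdvd
  have h3 : m' + D * k ∈ N := by
    have h4 := NSet.add_mul hx hgmem.1 k
    rwa [← hD] at h4
  have heq : m' + D * k = n := by omega
  rwa [heq] at h3

lemma exists_int_iff (m n D : ℕ) :
    (∃ k : ℤ, (m : ℝ) - (n : ℝ) = k * (D : ℝ)) ↔ (m : ZMod D) = (n : ZMod D) := by
  rw [ZMod.natCast_eq_natCast_iff, Nat.modEq_iff_dvd]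
  constructor
  · rintro ⟨k, hk⟩
    have h : (m : ℤ) - n = k * D := by exact_mod_cast hk
    exact ⟨-k, by linarith⟩
  · rintro ⟨c, hc⟩
    refine ⟨-c, ?_⟩
    have h : (m : ℤ) - n = -c * D := by linarith
    exact_mod_cast h



/-- in the DP-system with a single initial vertex `v₀` on a metric
graph with positive integer edge lengths, for every edge `e` the number of points
on `e` is eventually equal to the number of equivalence classes of `≈` on
`W(v₀, e)`. -/
theorem stmt10 {E : Type} [Fintype E] (l : E → ℕ) (hl : ∀ e, 0 < l e)
    {V : Type} (ends : E → Sym2 V) (v₀ : V)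
    (hP : IsDPSystem ends ({v₀} : Set V)) (e : E) :
    ∃ T : ℝ, 0 ≤ T ∧ ∀ t ≥ T,
      NptsEdge ends (fun e => (l e : ℝ)) {v₀} e t
        = Nat.card (Quot (wapprox ends (fun e => (l e : ℝ)) v₀ e)) := by
  classical
  obtain ⟨hfin, hnd, hconn, -⟩ := hP
  obtain ⟨a, b, hab⟩ : ∃ a b, ends e = s(a, b) := by
    induction ends e using Sym2.inductionOn with
    | hf a b => exact ⟨a, b, rfl⟩
  have hne : a ≠ b := by
    have h := hnd e
    rw [hab, Sym2.mk_isDiag_iff] at h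
    exact h
  have hL : 0 < l e := hl e
  haveI : NeZero (2 * l e) := ⟨by omega⟩
  have ha_mem : a ∈ ends e := by rw [hab]; simp
  have hb_mem : b ∈ ends e := by rw [hab]; simp
  have hba : ends e = s(b, a) := hab.trans Sym2.eq_swap
  obtain ⟨Ma, hMa⟩ := NSet.eventual ends l v₀ a e ha_mem hL
  obtain ⟨Mb, hMb⟩ := NSet.eventual ends l v₀ b e hb_mem hL
  set D := 2 * l e with hD
  set lr : E → ℝ := fun f => (l f : ℝ) with hlr
  have hlre : lr e = (l e : ℝ) := rfl
  set SA : Set (ZMod D) := (fun n : ℕ => (n : ZMod D)) '' NSet ends l v₀ a with hSA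
  have hDr : (D : ℝ) = 2 * (l e : ℝ) := by rw [hD]; push_cast; ring
  have hcong : ∀ m n : ℕ, (∃ k : ℤ, (m : ℝ) - (n : ℝ) = k * (2 * (l e : ℝ))) ↔
      (m : ZMod D) = (n : ZMod D) := by
    intro m n
    rw [← exists_int_iff m n D, hDr]
  have hcong2 : ∀ m n : ℕ, (∃ k : ℤ, (m : ℝ) - (n : ℝ) - (l e : ℝ) = k * (2 * (l e : ℝ))) ↔
      (m : ZMod D) = (n : ZMod D) + (l e : ZMod D) := by
    intro m n
    have h1 := hcong m (n + l e)
    have h2 : ((n + l e : ℕ) : ℝ) = (n : ℝ) + (l e : ℝ) := by push_cast; ring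
    have h3 : ((n + l e : ℕ) : ZMod D) = (n : ZMod D) + (l e : ZMod D) := by push_cast; ring
    rw [h2] at h1
    rw [← h3, ← h1]
    constructor <;> (rintro ⟨k, hk⟩; exact ⟨k, by linarith⟩)
  have hLL : (l e : ZMod D) + (l e : ZMod D) = 0 := by
    have h := ZMod.natCast_self D
    rw [hD] at h
    push_cast at h
    linear_combination h
  set φ : WalkTo ends v₀ e → ZMod D :=
    fun w => (w.1.2.natLength l : ZMod D) + (if w.1.1 = a then 0 else (l e : ZMod D)) with hφ
  have hkey : ∀ w₁ w₂ : WalkTo ends v₀ e, wapprox ends lr v₀ e w₁ w₂ ↔ φ w₁ = φ w₂ := by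
    intro w₁ w₂
    obtain ⟨⟨x₁, u₁⟩, hx₁⟩ := w₁
    obtain ⟨⟨x₂, u₂⟩, hx₂⟩ := w₂
    have hx₁' : x₁ = a ∨ x₁ = b := by
      have h := hx₁; rw [hab] at h; simpa using h
    have hx₂' : x₂ = a ∨ x₂ = b := by
      have h := hx₂; rw [hab] at h; simpa using h
    have hlen1 : u₁.length lr = (u₁.natLength l : ℝ) := MGWalk.length_natCast l u₁
    have hlen2 : u₂.length lr = (u₂.natLength l : ℝ) := MGWalk.length_natCast l u₂
    set m₁ := u₁.natLength l with hm₁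
    set m₂ := u₂.natLength l with hm₂
    show ((x₁ = x₂ ∧ ∃ k : ℤ, u₁.length lr - u₂.length lr = k * (2 * lr e)) ∨
      (x₁ ≠ x₂ ∧ ∃ k : ℤ, u₁.length lr - u₂.length lr - lr e = k * (2 * lr e))) ↔
      (m₁ : ZMod D) + (if x₁ = a then 0 else (l e : ZMod D)) =
      (m₂ : ZMod D) + (if x₂ = a then 0 else (l e : ZMod D))
    rw [hlen1, hlen2, hlre]
    have hflip : ∀ p q : ℕ, ((p : ZMod D) = (q : ZMod D) + (l e : ZMod D)) ↔
        ((p : ZMod D) + (l e : ZMod D) = (q : ZMod D)) := by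
      intro p q
      constructor
      · intro h; rw [h, add_assoc, hLL, add_zero]
      · intro h; rw [← h, add_assoc, hLL, add_zero]
    rcases hx₁' with h1 | h1 <;> rcases hx₂' with h2 | h2 <;> rw [h1, h2]
    · rw [if_pos rfl, add_zero, add_zero]
      constructor
      · rintro (⟨-, hk⟩ | ⟨hcon, -⟩)
        · exact (hcong m₁ m₂).mp hk
        · exact absurd rfl hcon
      · intro h
        exact Or.inl ⟨rfl, (hcong m₁ m₂).mpr h⟩
    · rw [if_pos rfl, if_neg (Ne.symm hne), add_zero]
      constructor
      · rintro (⟨h, -⟩ | ⟨-, hk⟩)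
        · exact absurd h hne
        · exact (hcong2 m₁ m₂).mp hk
      · intro h
        exact Or.inr ⟨hne, (hcong2 m₁ m₂).mpr h⟩
    · rw [if_neg (Ne.symm hne), if_pos rfl, add_zero]
      constructor
      · rintro (⟨h, -⟩ | ⟨-, hk⟩)
        · exact absurd h (Ne.symm hne)
        · exact (hflip m₁ m₂).mp ((hcong2 m₁ m₂).mp hk)
      · intro h
        exact Or.inr ⟨Ne.symm hne, (hcong2 m₁ m₂).mpr ((hflip m₁ m₂).mpr h)⟩
    · rw [if_neg (Ne.symm hne)]
      constructor
      · rintro (⟨-, hk⟩ | ⟨hcon, -⟩)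
        · rw [(hcong m₁ m₂).mp hk]
        · exact absurd rfl hcon
      · intro h
        exact Or.inl ⟨rfl, (hcong m₁ m₂).mpr (add_right_cancel h)⟩
  have hsound : ∀ w₁ w₂, wapprox ends lr v₀ e w₁ w₂ → φ w₁ = φ w₂ :=
    fun w₁ w₂ h => (hkey w₁ w₂).mp h
  have hginj : Function.Injective (Quot.lift φ hsound) := by
    intro q₁ q₂
    induction q₁ using Quot.ind
    induction q₂ using Quot.ind
    intro h
    exact Quot.sound ((hkey _ _).mpr h)
  have h1 : Nat.card (Quot (wapprox ends lr v₀ e)) = Nat.card (Set.range (Quot.lift φ hsound)) :=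
    (Nat.card_range_of_injective hginj).symm
  have hrange : Set.range (Quot.lift φ hsound) = SA := by
    ext r
    constructor
    · rintro ⟨q, rfl⟩
      refine Quot.inductionOn q ?_
      rintro ⟨⟨x, u⟩, hx⟩
      have hx' : x = a ∨ x = b := by
        have h := hx; rw [hab] at h; simpa using h
      rcases hx' with rfl | rfl
      · exact ⟨u.natLength l, ⟨u, rfl⟩, by simp [hφ]⟩
      · refine ⟨u.natLength l + l e, NSet.cross hba ⟨u, rfl⟩, ?_⟩
        show ((u.natLength l + l e : ℕ) : ZMod D) = φ ⟨⟨_, u⟩, hx⟩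
        rw [hφ]
        simp only [if_neg (Ne.symm hne)]
        push_cast
        ring
    · rintro ⟨n, ⟨u, rfl⟩, rfl⟩
      exact ⟨Quot.mk _ ⟨⟨a, u⟩, ha_mem⟩, by simp [hφ]⟩
  have hclass : Nat.card (Quot (wapprox ends lr v₀ e)) = SA.ncard := by
    rw [h1, hrange, Nat.card_coe_set_eq]
  refine ⟨((Ma + Mb + 2 * l e : ℕ) : ℝ), by positivity, ?_⟩
  intro t ht
  rw [hclass]
  have htcast : (Ma : ℝ) + Mb + 2 * l e ≤ t := by push_cast at ht; linarith
  have hwin : ∀ n : ℕ, t - l e < (n : ℝ) → (Ma ≤ n ∧ Mb ≤ n) := by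
    intro n hn
    have h0a : (0:ℝ) ≤ Ma := Nat.cast_nonneg _
    have h0b : (0:ℝ) ≤ Mb := Nat.cast_nonneg _
    have h0l : (0:ℝ) ≤ l e := Nat.cast_nonneg _
    constructor
    · exact_mod_cast le_of_lt (show (Ma:ℝ) < n by linarith)
    · exact_mod_cast le_of_lt (show (Mb:ℝ) < n by linarith)
  set ψ : V × ℝ → ZMod D :=
    fun p => ((⌊t - p.2⌋ : ℤ) : ZMod D) + (if p.1 = a then 0 else (l e : ZMod D)) with hψ
  set P : Set (V × ℝ) := {p : V × ℝ | IsPoint ends lr {v₀} t e p.1 p.2} with hPdef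
  have hchar : ∀ x s, IsPoint ends lr {v₀} t e x s ↔
      ((x = a ∨ x = b) ∧ ∃ n : ℕ, n ∈ NSet ends l v₀ x ∧ (n : ℝ) ≤ t ∧
        t - l e < (n : ℝ) ∧ s = t - n) := by
    intro x s
    unfold IsPoint
    rw [hlre]
    constructor
    · rintro ⟨hx, hs0, hsl, v, hv, w, hw⟩
      rw [Set.mem_singleton_iff] at hv
      subst hv
      rw [show lr = fun f => ((l f : ℕ) : ℝ) from rfl, MGWalk.length_natCast] at hw
      refine ⟨by rw [hab, Sym2.mem_iff] at hx; exact hx, w.natLength l, ⟨w, rfl⟩,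
        by linarith, by linarith, by linarith⟩
    · rintro ⟨hx, n, ⟨w, hw⟩, hn1, hn2, rfl⟩
      refine ⟨by rw [hab, Sym2.mem_iff]; exact hx, by linarith, by linarith,
        v₀, Set.mem_singleton v₀, w, ?_⟩
      rw [show lr = fun f => ((l f : ℕ) : ℝ) from rfl, MGWalk.length_natCast, hw]
      ring
  have hfloor : ∀ n : ℕ, ⌊t - (t - (n : ℝ))⌋ = (n : ℤ) := by
    intro n
    rw [sub_sub_cancel]
    exact_mod_cast Int.floor_natCast n
  have hψval : ∀ (x : V) (n : ℕ), ψ (x, t - (n : ℝ)) =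
      (n : ZMod D) + (if x = a then 0 else (l e : ZMod D)) := by
    intro x n
    rw [hψ]
    simp only
    rw [hfloor n]
    push_cast
    ring
  have hinj : Set.InjOn ψ P := by
    rintro ⟨x, s⟩ hp ⟨y, u⟩ hq hpsi
    rw [hPdef, Set.mem_setOf_eq] at hp hq
    obtain ⟨hx, n, hnN, hn1, hn2, rfl⟩ := (hchar x s).mp hp
    obtain ⟨hy, m, hmN, hm1, hm2, rfl⟩ := (hchar y u).mp hq
    rw [hψval, hψval] at hpsi
    have hd1 : (n : ℤ) - m < l e := by
      have : (n : ℝ) - m < l e := by linarith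
      exact_mod_cast this
    have hd2 : (m : ℤ) - n < l e := by
      have : (m : ℝ) - n < l e := by linarith
      exact_mod_cast this
    have hDz : ((2 * l e : ℕ) : ℤ) = 2 * (l e : ℤ) := by push_cast; ring
    have heqcase : ∀ hxy : x = y, (n : ZMod D) = (m : ZMod D) → (x, t - (n:ℝ)) = (y, t - (m:ℝ)) := by
      intro hxy hcast
      have hmod : n ≡ m [MOD D] := (ZMod.natCast_eq_natCast_iff _ _ _).mp hcast
      have hdvd : (D : ℤ) ∣ (m : ℤ) - n := Nat.modEq_iff_dvd.mp hmod
      have hz : (m : ℤ) - n = 0 := by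
        refine Int.eq_zero_of_abs_lt_dvd hdvd ?_
        rw [abs_lt]
        constructor
        · rw [hD, hDz]; omega
        · rw [hD, hDz]; omega
      have : n = m := by omega
      rw [hxy, this]
    have hmixed : ∀ p q : ℕ, ((p : ℤ) - q < l e) → ((q : ℤ) - p < l e) →
        (p : ZMod D) = (q : ZMod D) + (l e : ZMod D) → False := by
      intro p q hpq hqp hcast
      have hcast2 : (p : ZMod D) = ((q + l e : ℕ) : ZMod D) := by
        push_cast
        linear_combination hcast
      have hmod : p ≡ q + l e [MOD D] := (ZMod.natCast_eq_natCast_iff _ _ _).mp hcast2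
      have hdvd : (D : ℤ) ∣ ((q + l e : ℕ) : ℤ) - p := Nat.modEq_iff_dvd.mp hmod
      have hpos : 0 < ((q + l e : ℕ) : ℤ) - p := by push_cast; omega
      have hlt : ((q + l e : ℕ) : ℤ) - p < D := by rw [hD, hDz]; push_cast; omega
      have := Int.le_of_dvd hpos hdvd
      omega
    rcases hx with h1 | h1 <;> rcases hy with h2 | h2 <;> rw [h1, h2] at hpsi
    · rw [if_pos rfl, add_zero, add_zero] at hpsi
      exact heqcase (h1.trans h2.symm) hpsi
    · rw [if_pos rfl, if_neg (Ne.symm hne), add_zero] at hpsi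
      exact absurd hpsi (fun h => hmixed n m hd1 hd2 h)
    · rw [if_neg (Ne.symm hne), if_pos rfl, add_zero] at hpsi
      exact absurd hpsi.symm (fun h => hmixed m n hd2 hd1 h)
    · rw [if_neg (Ne.symm hne)] at hpsi
      exact heqcase (h1.trans h2.symm) (add_right_cancel hpsi)
  have himg : ψ '' P = SA := by
    apply Set.Subset.antisymm
    · rintro r ⟨⟨x, s⟩, hp, rfl⟩
      rw [hPdef, Set.mem_setOf_eq] at hp
      obtain ⟨hx, n, hnN, hn1, hn2, rfl⟩ := (hchar x s).mp hp
      rcases hx with h1 | h1 <;> rw [h1] at hnN ⊢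
      · exact ⟨n, hnN, by rw [hψval, if_pos rfl, add_zero]⟩
      · refine ⟨n + l e, NSet.cross hba hnN, ?_⟩
        rw [hψval, if_neg (Ne.symm hne)]
        push_cast
        ring
    · rintro r ⟨m, hmN, rfl⟩
      have h0l : (0:ℝ) ≤ l e := Nat.cast_nonneg _
      have h0a : (0:ℝ) ≤ Ma := Nat.cast_nonneg _
      have h0b : (0:ℝ) ≤ Mb := Nat.cast_nonneg _
      have ht0 : (0:ℝ) ≤ t := by linarith
      have hfl0 : (0:ℤ) ≤ ⌊t⌋ := Int.floor_nonneg.mpr ht0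
      set j : ℕ := ⌊t⌋.toNat with hj
      have hjz : ((j : ℕ) : ℤ) = ⌊t⌋ := Int.toNat_of_nonneg hfl0
      have hjt : (j : ℝ) ≤ t := by
        have := Int.floor_le t
        rw [← hjz] at this
        exact_mod_cast this
      have hjt2 : t < (j : ℝ) + 1 := by
        have := Int.lt_floor_add_one t
        rw [← hjz] at this
        exact_mod_cast this
      have hjD : D ≤ j := by
        have hDle : (D : ℝ) ≤ t := by rw [hDr]; linarith
        have : (D : ℝ) < (j : ℝ) + 1 := by linarith
        have : D < j + 1 := by exact_mod_cast this
        omega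
      set c := m % D with hc
      have hD0 : 0 < D := by rw [hD]; omega
      have hcD : c < D := Nat.mod_lt _ hD0
      have hcZ : (c : ZMod D) = (m : ZMod D) := by rw [hc]; exact ZMod.natCast_mod m D
      set d := (j - c) % D with hd
      set q := (j - c) / D with hq
      have hdq : d + D * q = j - c := Nat.mod_add_div _ _
      have hdD : d < D := Nat.mod_lt _ hD0
      have hcj : c ≤ j := le_trans (le_of_lt hcD) hjD
      set n' := c + D * q with hn'
      have hn'le : n' ≤ j := by omega
      have hn'gt : j < n' + D := by omega
      have hn'Z : (n' : ZMod D) = (m : ZMod D) := by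
        rw [hn']
        push_cast [ZMod.natCast_self]
        rw [hcZ]
        ring
      by_cases hcase : j < n' + l e
      · have hwin1 : (n' : ℝ) ≤ t := le_trans (Nat.cast_le.mpr hn'le) hjt
        have hwin2 : t - l e < (n' : ℝ) := by
          have : (j : ℝ) + 1 ≤ (n' : ℝ) + l e := by exact_mod_cast hcase
          linarith
        have hn'N : n' ∈ NSet ends l v₀ a :=
          (hMa n' (hwin n' hwin2).1).mpr ⟨m, hmN, hn'Z.symm⟩
        refine ⟨(a, t - (n' : ℝ)), ?_, ?_⟩
        · rw [hPdef, Set.mem_setOf_eq]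
          exact (hchar a _).mpr ⟨Or.inl rfl, n', hn'N, hwin1, hwin2, rfl⟩
        · rw [hψval, if_pos rfl, add_zero, hn'Z]
      · set n := n' + l e with hnn
        have hnle : n ≤ j := by omega
        have hngt : j < n + l e := by rw [hnn, hD] at *; omega
        have hwin1 : (n : ℝ) ≤ t := le_trans (Nat.cast_le.mpr hnle) hjt
        have hwin2 : t - l e < (n : ℝ) := by
          have : (j : ℝ) + 1 ≤ (n : ℝ) + l e := by exact_mod_cast hngt
          linarith
        have hnZ : (n : ZMod D) = ((m + l e : ℕ) : ZMod D) := by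
          rw [hnn]
          push_cast
          rw [hn'Z]
        have hnN : n ∈ NSet ends l v₀ b :=
          (hMb n (hwin n hwin2).2).mpr ⟨m + l e, NSet.cross hab hmN, hnZ.symm⟩
        refine ⟨(b, t - (n : ℝ)), ?_, ?_⟩
        · rw [hPdef, Set.mem_setOf_eq]
          exact (hchar b _).mpr ⟨Or.inr rfl, n, hnN, hwin1, hwin2, rfl⟩
        · rw [hψval, if_neg (Ne.symm hne), hnZ]
          push_cast
          rw [add_assoc, hLL, add_zero]
  calc NptsEdge ends lr {v₀} e t = P.ncard := rfl
    _ = (ψ '' P).ncard := (Set.ncard_image_of_injOn hinj).symm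
    _ = SA.ncard := by rw [himg]
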